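/- arXiv:1006.0649 — 3 statements merged into one kernel-verified Lean document; each statement's English description precedes it below -/
import Mathlib

section
/- Let n ≥ 1 and N = n+2, with coordinates (u, z, τ), z ∈ ℝ^n. Let B be a symmetric invertible n×n real matrix, writing B(z,w) = zᵀBw, and let f be a smooth function of (z,τ). Let F(u,z,τ) = (1/2)u²τ − (1/2)uB(z,z) + f(z,τ) on a domain D with τ ≠ 0 that is closed under the inversion map. Then F satisfies the fixed-point identity F(t̂) = (τ̂)² F(t(t̂)) + (1/2) t̂^1 (2 t̂^1 τ̂ − B(ẑ,ẑ)) for all t̂ = (t̂^1, ẑ, τ̂) in the image of D if and only if f(z/τ, −1/τ) = τ^{−2} f(z,τ) − B(z,z)²/(8τ³) for all (z,τ) occurring in D. -/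
open scoped BigOperators

/-- The quadratic form `B(z,z) = zᵀ B z` of a matrix `B`. -/
def Bq {n : ℕ} (B : Matrix (Fin n) (Fin n) ℝ) (z : Fin n → ℝ) : ℝ :=
  ∑ i, ∑ j, z i * B i j * z j

lemma Bq_div' {n : ℕ} (B : Matrix (Fin n) (Fin n) ℝ) (z : Fin n → ℝ) (τ : ℝ) :
    Bq B (fun i => z i / τ) = Bq B z / τ ^ 2 := by
  simp only [Bq, Finset.sum_div]
  exact Finset.sum_congr rfl fun i _ => Finset.sum_congr rfl fun j _ => by ring

lemma alg_key' (a b c u τ : ℝ) (hτ : τ ≠ 0) :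
    ((1 / 2 * (u - c / (2 * τ)) ^ 2 * (-1 / τ) -
        1 / 2 * (u - c / (2 * τ)) * (c / τ ^ 2)) + a) -
      ((-1 / τ) ^ 2 *
          ((1 / 2 * (u - c / (2 * τ) + τ / 2 * (c / τ ^ 2)) ^ 2 * τ -
              1 / 2 * (u - c / (2 * τ) + τ / 2 * (c / τ ^ 2)) * c) + b) +
        1 / 2 * (u - c / (2 * τ)) * (2 * (u - c / (2 * τ)) * (-1 / τ) - c / τ ^ 2)) =
      a - ((τ ^ 2)⁻¹ * b - c ^ 2 / (8 * τ ^ 3)) := by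
  field_simp
  ring

/-- for `F(u,z,τ) = (1/2)u²τ - (1/2)u B(z,z) + f(z,τ)` on a domain `D` with
`τ ≠ 0` closed under the inversion map, the fixed point identity
`F(t̂) = τ̂² F(t(t̂)) + (1/2) t̂¹ (2 t̂¹ τ̂ - B(ẑ,ẑ))` holds on the image of `D` iff
`f(z/τ, -1/τ) = τ⁻² f(z,τ) - B(z,z)²/(8τ³)` on `D`. -/
theorem statement2 (n : ℕ) (hn : 1 ≤ n)
    (B : Matrix (Fin n) (Fin n) ℝ) (hBsymm : B.IsSymm) (hBdet : IsUnit B.det)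
    (f : (Fin n → ℝ) → ℝ → ℝ)
    (hf : ContDiff ℝ (⊤ : ℕ∞) (fun zt : (Fin n → ℝ) × ℝ => f zt.1 zt.2))
    (F : ℝ × (Fin n → ℝ) × ℝ → ℝ)
    (hF : F = fun P => (1/2) * P.1^2 * P.2.2 - (1/2) * P.1 * Bq B P.2.1 + f P.2.1 P.2.2)
    -- the inversion map and its inverse
    (ι invι : ℝ × (Fin n → ℝ) × ℝ → ℝ × (Fin n → ℝ) × ℝ)
    (hι : ι = fun P => (P.1 - Bq B P.2.1 / (2 * P.2.2), fun i => P.2.1 i / P.2.2,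
      -1 / P.2.2))
    (hinvι : invι = fun Q => (Q.1 + ((-1 / Q.2.2) / 2) * Bq B Q.2.1,
      fun i => (-1 / Q.2.2) * Q.2.1 i, -1 / Q.2.2))
    (D : Set (ℝ × (Fin n → ℝ) × ℝ))
    (hD : ∀ P ∈ D, P.2.2 ≠ 0)
    (hclosed : ∀ P ∈ D, ι P ∈ D) :
    (∀ Q ∈ ι '' D,
        F Q = Q.2.2 ^ 2 * F (invι Q) + (1/2) * Q.1 * (2 * Q.1 * Q.2.2 - Bq B Q.2.1)) ↔
      (∀ P ∈ D,
        f (fun i => P.2.1 i / P.2.2) (-1 / P.2.2) =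
          (P.2.2 ^ 2)⁻¹ * f P.2.1 P.2.2 - (Bq B P.2.1) ^ 2 / (8 * P.2.2 ^ 3)) := by
  subst hF hι hinvι
  constructor
  · intro h P hP
    obtain ⟨u, z, τ⟩ := P
    have hτ : τ ≠ 0 := hD _ hP
    have hh := h _ ⟨(u, z, τ), hP, rfl⟩
    simp only at hh
    have ht : (-1 : ℝ) / (-1 / τ) = τ := by field_simp
    rw [ht] at hh
    have hz : (fun i => τ * (z i / τ)) = z := by funext i; field_simp
    rw [hz, Bq_div'] at hh
    have key := alg_key' (f (fun i => z i / τ) (-1 / τ)) (f z τ) (Bq B z) u τ hτ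
    have h0 := sub_eq_zero.mpr hh
    rw [key] at h0
    exact sub_eq_zero.mp h0
  · intro h Q hQ
    obtain ⟨⟨u, z, τ⟩, hP, rfl⟩ := hQ
    have hτ : τ ≠ 0 := hD _ hP
    have hh := h _ hP
    simp only
    have ht : (-1 : ℝ) / (-1 / τ) = τ := by field_simp
    rw [ht]
    have hz : (fun i => τ * (z i / τ)) = z := by funext i; field_simp
    rw [hz, Bq_div']
    have key := alg_key' (f (fun i => z i / τ) (-1 / τ)) (f z τ) (Bq B z) u τ hτ
    have h0 := sub_eq_zero.mpr hh
    rw [← key] at h0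
    exact sub_eq_zero.mp h0
end

section
/- Let I ⊆ ℝ∖{0} be open with −1/τ ∈ I whenever τ ∈ I, and let γ : I → ℝ be smooth. Define F_γ(t^1,t^2,t^3) = (1/2)(t^1)²t^3 + (1/2)t^1(t^2)² − (1/16)(t^2)⁴γ(t^3) on ℝ² × I. Then F_γ satisfies the fixed-point identity F_γ(t̂) = (t̂^3)² F_γ(t(t̂)) + (1/2) t̂^1 (2 t̂^1 t̂^3 + (t̂^2)²) for all t̂ in the image of ℝ² × I under the inversion map if and only if γ(−1/τ) = τ²γ(τ) + 2τ for all τ ∈ I. -/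
open scoped BigOperators

/-- for `F_γ(t¹,t²,t³) = (1/2)(t¹)²t³ + (1/2)t¹(t²)² - (1/16)(t²)⁴γ(t³)`,
the fixed-point identity under the inversion symmetry holds iff
`γ(-1/τ) = τ²γ(τ) + 2τ` on `I`. -/
theorem statement3 (I : Set ℝ) (hI : IsOpen I) (hI0 : (0 : ℝ) ∉ I)
    (hIinv : ∀ τ ∈ I, -1 / τ ∈ I)
    (γ : ℝ → ℝ) (hγ : ContDiffOn ℝ (⊤ : ℕ∞) γ I)
    (F : ℝ × ℝ × ℝ → ℝ)
    (hF : F = fun P => (1/2) * P.1^2 * P.2.2 + (1/2) * P.1 * P.2.1^2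
      - (1/16) * P.2.1^4 * γ P.2.2)
    -- the inversion map and its inverse
    (ι invι : ℝ × ℝ × ℝ → ℝ × ℝ × ℝ)
    (hι : ι = fun P => ((2 * P.1 * P.2.2 + P.2.1^2) / (2 * P.2.2), P.2.1 / P.2.2,
      -1 / P.2.2))
    (hinvι : invι = fun Q => ((2 * Q.1 * Q.2.2 + Q.2.1^2) / (2 * Q.2.2),
      -Q.2.1 / Q.2.2, -1 / Q.2.2))
    (D : Set (ℝ × ℝ × ℝ)) (hD : D = {P : ℝ × ℝ × ℝ | P.2.2 ∈ I}) :
    (∀ Q ∈ ι '' D,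
        F Q = Q.2.2 ^ 2 * F (invι Q) + (1/2) * Q.1 * (2 * Q.1 * Q.2.2 + Q.2.1 ^ 2)) ↔
      (∀ τ ∈ I, γ (-1 / τ) = τ ^ 2 * γ τ + 2 * τ) := by
  subst hF hι hinvι hD
  constructor
  · intro h τ hτ
    have hτ0 : τ ≠ 0 := fun h0 => hI0 (h0 ▸ hτ)
    have hmem : ((0 : ℝ), (1 : ℝ), τ) ∈ {P : ℝ × ℝ × ℝ | P.2.2 ∈ I} := hτ
    have this := h _ ⟨((0 : ℝ), (1 : ℝ), τ), hmem, rfl⟩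
    simp only at this
    rw [show (-1 : ℝ) / (-1 / τ) = τ by field_simp] at this
    have h2 : -((1:ℝ)/τ)/(-1/τ) = 1 := by field_simp
    linear_combination (norm := (field_simp; ring)) (-16*τ^4) * this
  · rintro h Q ⟨⟨a, b, c⟩, hP, rfl⟩
    have hc : c ∈ I := hP
    have hc0 : c ≠ 0 := fun h0 => hI0 (h0 ▸ hc)
    have key := h c hc
    simp only
    rw [show (-1 : ℝ) / (-1 / c) = c by field_simp]
    linear_combination (norm := (field_simp; ring)) (-(b^4/(16*c^4))) * key
end

section
/- Let I ⊆ ℝ be open and γ : I → ℝ smooth, and define F_γ(t^1,t^2,t^3) = (1/2)(t^1)²t^3 + (1/2)t^1(t^2)² − (1/16)(t^2)⁴γ(t^3) on ℝ² × I. Then F_γ is a WDVV solution (with N = 3 and antidiagonal η) if and only if γ satisfies the Chazy equation γ'''(τ) = 6γ(τ)γ''(τ) − 9(γ'(τ))² for all τ ∈ I. -/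
open scoped BigOperators

/-- Partial derivative of `f` in the `α`-th coordinate direction. -/
noncomputable def pd {N : ℕ} (α : Fin N) (f : (Fin N → ℝ) → ℝ) : (Fin N → ℝ) → ℝ :=
  fun t => fderiv ℝ f t (Pi.single α 1)

/-- Third partial derivatives `c_{αβγ} = ∂³F/∂t^α∂t^β∂t^γ`. -/
noncomputable def c3 {N : ℕ} (F : (Fin N → ℝ) → ℝ) (α β γ : Fin N) : (Fin N → ℝ) → ℝ :=
  pd α (pd β (pd γ F))

/-- `η_{αβ} = δ_{α+β,N+1}` (in 1-based index notation); in 0-based indexing this is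
`β = Fin.rev α`.  It coincides with its own inverse `η^{αβ}`. -/
def eta {N : ℕ} (α β : Fin N) : ℝ := if β = α.rev then 1 else 0

/-- The index of the coordinate `t^N` (0-based: `N-1`). -/
def lastIdx (N : ℕ) [NeZero N] : Fin N := (0 : Fin N).rev

/-- `F` is a WDVV solution on `U`: smoothness, normalization `c_{1αβ} = η_{αβ}`, and the
associativity equations. -/
def IsWDVV {N : ℕ} [NeZero N] (F : (Fin N → ℝ) → ℝ) (U : Set (Fin N → ℝ)) : Prop :=
  (∀ t ∈ U, ContDiffAt ℝ (⊤ : ℕ∞) F t) ∧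
  (∀ t ∈ U, ∀ α β : Fin N, c3 F 0 α β t = eta α β) ∧
  (∀ t ∈ U, ∀ α β γ δ : Fin N,
    ∑ lam, ∑ mu, c3 F α β lam t * eta lam mu * c3 F mu δ γ t =
    ∑ lam, ∑ mu, c3 F δ β lam t * eta lam mu * c3 F mu α γ t)

/-- `F` is quasihomogeneous on `U` with charges `q` and weight `d`:
`q_1 = 0`, `q_N = d`, `q_α + q_{N+1-α} = d`, and `E(F) = (3-d) F` modulo a polynomial of
degree at most `2`, where `E = Σ_α (1-q_α) t^α ∂_α`. -/
def IsQH {N : ℕ} [NeZero N] (F : (Fin N → ℝ) → ℝ) (U : Set (Fin N → ℝ))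
    (q : Fin N → ℝ) (d : ℝ) : Prop :=
  q 0 = 0 ∧ q (lastIdx N) = d ∧ (∀ α : Fin N, q α + q α.rev = d) ∧
  ∃ Q : MvPolynomial (Fin N) ℝ, Q.totalDegree ≤ 2 ∧
    ∀ t ∈ U, (∑ α, (1 - q α) * t α * pd α F t) = (3 - d) * F t + MvPolynomial.eval t Q

/-- The inversion map `t ↦ t̂`:
`t̂^1 = (1/2) t_σ t^σ / t^N`, `t̂^α = t^α/t^N` (`1<α<N`), `t̂^N = -1/t^N`,
with `t_σ t^σ = Σ_σ t^σ t^{N+1-σ}`. -/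
noncomputable def invMap {N : ℕ} [NeZero N] (t : Fin N → ℝ) : Fin N → ℝ := fun α =>
  if α = 0 then (∑ σ, t σ * t σ.rev) / (2 * t (lastIdx N))
  else if α = lastIdx N then -1 / t (lastIdx N)
  else t α / t (lastIdx N)

/-- The inverse of the inversion map, `t̂ ↦ t`:
`t^1 = (1/2) t̂_σ t̂^σ / t̂^N`, `t^α = -t̂^α/t̂^N` (`1<α<N`), `t^N = -1/t̂^N`. -/
noncomputable def invMapInv {N : ℕ} [NeZero N] (s : Fin N → ℝ) : Fin N → ℝ := fun α =>
  if α = 0 then (∑ σ, s σ * s σ.rev) / (2 * s (lastIdx N))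
  else if α = lastIdx N then -1 / s (lastIdx N)
  else -(s α) / s (lastIdx N)

/-- The inverted prepotential `F̂(t̂) = (t̂^N)² F(t(t̂)) + (1/2) t̂^1 t̂_σ t̂^σ`. -/
noncomputable def invF {N : ℕ} [NeZero N] (F : (Fin N → ℝ) → ℝ) : (Fin N → ℝ) → ℝ :=
  fun s => (s (lastIdx N))^2 * F (invMapInv s) + (1/2) * s 0 * (∑ σ, s σ * s σ.rev)

/-!
For a prepotential of the normal form `½ (t¹)² t³ + ½ t¹ (t²)² + f(t², t³)` the normalization
`c_{1αβ} = η_{αβ}` holds automatically, and the associativity equations collapse to the single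
equation `f₃₃₃ = f₂₂₃² - f₂₂₂ f₂₃₃`. For `f = -(1/16) (t²)⁴ γ(t³)` its two sides differ by
`(t²)⁴/16` times `γ''' - 6 γ γ'' + 9 γ'²`, so it holds on `ℝ² × I` iff `γ` solves the Chazy
equation on `I`.
-/

theorem fderiv_eval_apply {ι : Type*} [Fintype ι] (i : ι) (t v : ι → ℝ) :
    fderiv ℝ (fun s : ι → ℝ => s i) t v = v i := by
  rw [(hasFDerivAt_apply i t).fderiv]
  rfl

theorem fderiv_comp_eval_apply {ι : Type*} [Fintype ι] {g : ℝ → ℝ} {i : ι} {t : ι → ℝ}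
    (hg : DifferentiableAt ℝ g (t i)) (v : ι → ℝ) :
    fderiv ℝ (fun s : ι → ℝ => g (s i)) t v = deriv g (t i) * v i := by
  rw [fderiv_fun_comp (f := fun s : ι → ℝ => s i) t hg (differentiableAt_apply i t)]
  simp [fderiv_eval_apply, mul_comm]

theorem pd_congr_of_eqOn {N : ℕ} {U : Set (Fin N → ℝ)} (hU : IsOpen U)
    {f g : (Fin N → ℝ) → ℝ} (hfg : Set.EqOn f g U) {t : Fin N → ℝ} (ht : t ∈ U) (α : Fin N) :
    pd α f t = pd α g t := by
  simp only [pd, (Filter.eventuallyEq_of_mem (hU.mem_nhds ht) hfg).fderiv_eq]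

section Associativity

def IsAssociative {N : ℕ} (c : Fin N → Fin N → Fin N → ℝ) : Prop :=
  ∀ α β γ δ : Fin N, ∑ lam, ∑ mu, c α β lam * eta lam mu * c mu δ γ =
    ∑ lam, ∑ mu, c δ β lam * eta lam mu * c mu α γ

/-- The third derivatives of `½ t₀² t₂ + ½ t₀ t₁² + f(t₁, t₂)` (indices from `0`), where
`a, b, c, d` are the values of `f₁₁₁, f₁₁₂, f₁₂₂, f₂₂₂`. -/
def normalFormTensor (a b c d : ℝ) : Fin 3 → Fin 3 → Fin 3 → ℝ :=
  ![![![0, 0, 1], ![0, 1, 0], ![1, 0, 0]],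
    ![![0, 1, 0], ![1, a, b], ![0, b, c]],
    ![![1, 0, 0], ![0, b, c], ![0, c, d]]]

theorem eta_fin_three : (eta : Fin 3 → Fin 3 → ℝ) = ![![0, 0, 1], ![0, 1, 0], ![1, 0, 0]] := by
  ext α β
  fin_cases α <;> fin_cases β <;> rfl

theorem normalFormTensor_zero (a b c d : ℝ) (α β : Fin 3) :
    normalFormTensor a b c d 0 α β = eta α β := by
  rw [eta_fin_three]
  rfl

theorem isAssociative_normalFormTensor_iff (a b c d : ℝ) :
    IsAssociative (normalFormTensor a b c d) ↔ d = b ^ 2 - a * c := by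
  simp only [IsAssociative, Fin.sum_univ_three, eta_fin_three]
  constructor
  · intro h
    have h1122 : d + a * c = b * b := by simpa [normalFormTensor] using h 1 1 2 2
    linarith
  · rintro rfl α β γ δ
    fin_cases α <;> fin_cases β <;> fin_cases γ <;> fin_cases δ <;>
      simp [normalFormTensor] <;> ring

end Associativity

section ChazyPrepotential

variable {γ : ℝ → ℝ} {t : Fin 3 → ℝ}

noncomputable def chazyPrepotential (γ : ℝ → ℝ) : (Fin 3 → ℝ) → ℝ := fun t =>
  (1/2) * (t 0)^2 * t 2 + (1/2) * t 0 * (t 1)^2 - (1/16) * (t 1)^4 * γ (t 2)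

noncomputable def chazyGradient (γ : ℝ → ℝ) : Fin 3 → (Fin 3 → ℝ) → ℝ :=
  ![fun t => t 0 * t 2 + (1/2) * (t 1)^2,
    fun t => t 0 * t 1 - (1/4) * (t 1)^3 * γ (t 2),
    fun t => (1/2) * (t 0)^2 - (1/16) * (t 1)^4 * deriv γ (t 2)]

noncomputable def chazyHessian (γ : ℝ → ℝ) : Fin 3 → Fin 3 → (Fin 3 → ℝ) → ℝ :=
  ![![fun t => t 2, fun t => t 1, fun t => t 0],
    ![fun t => t 1, fun t => t 0 - (3/4) * (t 1)^2 * γ (t 2),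
      fun t => -(1/4) * (t 1)^3 * deriv γ (t 2)],
    ![fun t => t 0, fun t => -(1/4) * (t 1)^3 * deriv γ (t 2),
      fun t => -(1/16) * (t 1)^4 * deriv (deriv γ) (t 2)]]

noncomputable def chazyTensor (γ : ℝ → ℝ) (t : Fin 3 → ℝ) : Fin 3 → Fin 3 → Fin 3 → ℝ :=
  normalFormTensor (-(3/2) * t 1 * γ (t 2)) (-(3/4) * (t 1)^2 * deriv γ (t 2))
    (-(1/4) * (t 1)^3 * deriv (deriv γ) (t 2))
    (-(1/16) * (t 1)^4 * deriv (deriv (deriv γ)) (t 2))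

theorem contDiffAt_chazyPrepotential {n : WithTop ℕ∞} (hγ : ContDiffAt ℝ n γ (t 2)) :
    ContDiffAt ℝ n (chazyPrepotential γ) t := by
  unfold chazyPrepotential
  fun_prop

theorem pd_chazyPrepotential (hγ : DifferentiableAt ℝ γ (t 2)) (δ : Fin 3) :
    pd δ (chazyPrepotential γ) t = chazyGradient γ δ t := by
  unfold chazyPrepotential
  fin_cases δ <;>
    simp (disch := fun_prop) [pd, chazyGradient, fderiv_fun_sub, fderiv_fun_mul, fderiv_fun_pow,
      fderiv_fun_add, fderiv_eval_apply, fderiv_comp_eval_apply hγ, Pi.single_apply] <;>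
    ring

theorem pd_chazyGradient (hγ : DifferentiableAt ℝ γ (t 2))
    (hγ' : DifferentiableAt ℝ (deriv γ) (t 2)) (β δ : Fin 3) :
    pd β (chazyGradient γ δ) t = chazyHessian γ β δ t := by
  fin_cases δ <;> fin_cases β <;>
    simp (disch := fun_prop) [pd, chazyGradient, chazyHessian, fderiv_fun_sub, fderiv_fun_mul,
      fderiv_fun_pow, fderiv_fun_add, fderiv_eval_apply, fderiv_comp_eval_apply hγ,
      fderiv_comp_eval_apply hγ', Pi.single_apply] <;>
    ring

theorem pd_chazyHessian (hγ : DifferentiableAt ℝ γ (t 2))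
    (hγ' : DifferentiableAt ℝ (deriv γ) (t 2))
    (hγ'' : DifferentiableAt ℝ (deriv (deriv γ)) (t 2)) (α β δ : Fin 3) :
    pd α (chazyHessian γ β δ) t = chazyTensor γ t α β δ := by
  fin_cases β <;> fin_cases δ <;> fin_cases α <;>
    simp (disch := fun_prop) [pd, chazyHessian, chazyTensor, normalFormTensor, fderiv_fun_sub,
      fderiv_fun_mul, fderiv_fun_pow, fderiv_eval_apply,
      fderiv_comp_eval_apply hγ, fderiv_comp_eval_apply hγ', fderiv_comp_eval_apply hγ'',
      Pi.single_apply] <;>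
    ring

theorem c3_chazyPrepotential {I : Set ℝ} (hI : IsOpen I) (hγ : ContDiffOn ℝ 3 γ I)
    (ht : t 2 ∈ I) (α β δ : Fin 3) :
    c3 (chazyPrepotential γ) α β δ t = chazyTensor γ t α β δ := by
  have hU : IsOpen {s : Fin 3 → ℝ | s 2 ∈ I} := hI.preimage (continuous_apply 2)
  have hγ' : ContDiffOn ℝ 2 (deriv γ) I := hγ.deriv_of_isOpen hI (by norm_num)
  have hγ'' : ContDiffOn ℝ 1 (deriv (deriv γ)) I := hγ'.deriv_of_isOpen hI (by norm_num)
  have hdiff {n : WithTop ℕ∞} {g : ℝ → ℝ} (hg : ContDiffOn ℝ n g I) (hn : n ≠ 0) {x : ℝ}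
      (hx : x ∈ I) : DifferentiableAt ℝ g x :=
    (hg.contDiffAt (hI.mem_nhds hx)).differentiableAt hn
  have hgrad : Set.EqOn (pd δ (chazyPrepotential γ)) (chazyGradient γ δ) {s | s 2 ∈ I} :=
    fun s hs => pd_chazyPrepotential (hdiff hγ (by norm_num) hs) δ
  have hhess : Set.EqOn (pd β (pd δ (chazyPrepotential γ))) (chazyHessian γ β δ)
      {s | s 2 ∈ I} := fun s hs =>
    (pd_congr_of_eqOn hU hgrad hs β).trans
      (pd_chazyGradient (hdiff hγ (by norm_num) hs) (hdiff hγ' (by norm_num) hs) β δ)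
  exact (pd_congr_of_eqOn hU hhess ht α).trans
    (pd_chazyHessian (hdiff hγ (by norm_num) ht) (hdiff hγ' (by norm_num) ht)
      (hdiff hγ'' (by norm_num) ht) α β δ)

end ChazyPrepotential

/-- `F_γ = (1/2)(t¹)²t³ + (1/2)t¹(t²)² - (1/16)(t²)⁴γ(t³)` is a WDVV
solution on `ℝ² × I` iff `γ` satisfies the Chazy equation
`γ''' = 6γγ'' - 9(γ')²` on `I`. -/
theorem statement4 (I : Set ℝ) (hI : IsOpen I)
    (γ : ℝ → ℝ) (hγ : ContDiffOn ℝ (⊤ : ℕ∞) γ I) :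
    IsWDVV (fun t : Fin 3 → ℝ =>
        (1/2) * (t 0)^2 * t 2 + (1/2) * t 0 * (t 1)^2 - (1/16) * (t 1)^4 * γ (t 2))
      {t : Fin 3 → ℝ | t 2 ∈ I} ↔
    ∀ τ ∈ I, deriv (deriv (deriv γ)) τ =
        6 * γ τ * deriv (deriv γ) τ - 9 * (deriv γ τ) ^ 2 := by
  change IsWDVV (chazyPrepotential γ) _ ↔ _
  have hc3 {t : Fin 3 → ℝ} (ht : t 2 ∈ I) :=
    c3_chazyPrepotential hI (hγ.of_le (WithTop.coe_le_coe.2 le_top)) ht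
  constructor
  · rintro ⟨-, -, hassoc⟩ τ hτ
    have h : IsAssociative (fun α β δ => c3 (chazyPrepotential γ) α β δ ![0, 1, τ]) :=
      hassoc ![0, 1, τ] hτ
    simp only [hc3 (t := ![0, 1, τ]) hτ, chazyTensor, isAssociative_normalFormTensor_iff,
      Matrix.cons_val_one, Matrix.cons_val_zero, Matrix.cons_val, one_pow, mul_one] at h
    linarith
  · intro hchazy
    refine ⟨fun t ht => contDiffAt_chazyPrepotential (hγ.contDiffAt (hI.mem_nhds ht)),
      fun t ht α β => by rw [hc3 ht, chazyTensor, normalFormTensor_zero], fun t ht => ?_⟩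
    change IsAssociative (fun α β δ => c3 (chazyPrepotential γ) α β δ t)
    simp only [hc3 ht, chazyTensor, isAssociative_normalFormTensor_iff, hchazy (t 2) ht]
    ring
end
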